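/- Let (P, y) be a KZ doctrine on a 2-category 𝒞. If L : A ⟶ B and K : B ⟶ C are P-admissible 1-cells, then the composite K·L : A ⟶ C is P-admissible. -/

import Mathlib

open CategoryTheory Bicategory

universe w v u

variable {𝒞 : Type u} [Bicategory.{w, v} 𝒞]

/-- A 2-cell `η : I ⟶ L ≫ R` exhibits `R` as a left extension of `I` along `L` when
pasting with `η` gives a bijection between 2-cells `R ⟶ M` and 2-cells `I ⟶ L ≫ M`. -/
def ExhibitsLeftExt {a b c : 𝒞} (L : a ⟶ b) (I : a ⟶ c) (R : b ⟶ c)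
    (η : I ⟶ L ≫ R) : Prop :=
  ∀ M : b ⟶ c, Function.Bijective (fun σ : R ⟶ M => η ≫ L ◁ σ)

/-- The left extension `(R, η)` of `I` along `L` is respected by `E` when the whiskering of
`η` by `E` exhibits `R ≫ E` as a left extension of `I ≫ E` along `L`. -/
def RespectsLeftExt {a b c d : 𝒞} (L : a ⟶ b) (I : a ⟶ c) (R : b ⟶ c)
    (η : I ⟶ L ≫ R) (E : c ⟶ d) : Prop :=
  ExhibitsLeftExt L (I ≫ E) (R ≫ E) ((η ▷ E) ≫ (α_ L R E).hom)

/-- A 2-cell `η : I ⟶ L ≫ R` exhibits `L` as a left lifting of `I` through `R` when pasting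
with `η` gives a bijection between 2-cells `L ⟶ K` and 2-cells `I ⟶ K ≫ R`. -/
def ExhibitsLeftLift {a b c : 𝒞} (R : b ⟶ c) (I : a ⟶ c) (L : a ⟶ b)
    (η : I ⟶ L ≫ R) : Prop :=
  ∀ K : a ⟶ b, Function.Bijective (fun δ : L ⟶ K => η ≫ δ ▷ R)

/-- The left lifting is absolute when it is preserved by whiskering with any 1-cell `F`. -/
def ExhibitsAbsLeftLift {a b c : 𝒞} (R : b ⟶ c) (I : a ⟶ c) (L : a ⟶ b)
    (η : I ⟶ L ≫ R) : Prop :=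
  ∀ {x : 𝒞} (F : x ⟶ a),
    ExhibitsLeftLift R (F ≫ I) (F ≫ L) ((F ◁ η) ≫ (α_ F L R).inv)

/-- A 1-cell is (representably) fully faithful when whiskering by it is bijective on 2-cells. -/
def FullyFaithful1Cell {a b : 𝒞} (F : a ⟶ b) : Prop :=
  ∀ {x : 𝒞} (u v : x ⟶ a), Function.Bijective (fun σ : u ⟶ v => σ ▷ F)

/-- A KZ doctrine on a 2-category (Marmolejo–Wood style, in terms of left extensions). -/
structure KZDoctrine (𝒞 : Type u) [Bicategory.{w, v} 𝒞] where
  /-- action on objects -/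
  P : 𝒞 → 𝒞
  /-- the units -/
  y : ∀ A : 𝒞, A ⟶ P A
  /-- chosen left extensions along the units -/
  ext : ∀ {A C : 𝒞}, (A ⟶ P C) → (P A ⟶ P C)
  /-- the invertible 2-cells exhibiting the chosen left extensions -/
  c : ∀ {A C : 𝒞} (F : A ⟶ P C), F ≅ y A ≫ ext F
  ext_isLeftExt : ∀ {A C : 𝒞} (F : A ⟶ P C),
    ExhibitsLeftExt (y A) F (ext F) (c F).hom
  /-- (a) the identity 2-cell exhibits `𝟙 (P A)` as a left extension of `y A` along `y A` -/
  y_selfExt : ∀ A : 𝒞, ExhibitsLeftExt (y A) (y A) (𝟙 (P A)) (ρ_ (y A)).inv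
  /-- (b) the chosen left extensions respect each other -/
  ext_respects : ∀ {A B C : 𝒞} (F : A ⟶ P B) (G : B ⟶ P C),
    RespectsLeftExt (y A) F (ext F) (c F).hom (ext G)

/-- `lan L` (also denoted `PL`), the chosen left extension of `y B ∘ L` along `y A`. -/
abbrev KZDoctrine.lan (D : KZDoctrine 𝒞) {A B : 𝒞} (L : A ⟶ B) : D.P A ⟶ D.P B :=
  D.ext (L ≫ D.y B)

/-- An object `X` is `P`-cocomplete when every `G : A ⟶ X` admits a left extension along
`y A` exhibited by an invertible 2-cell, and these left extensions respect the chosen left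
extensions of the KZ doctrine. -/
def PCocomplete (D : KZDoctrine 𝒞) (X : 𝒞) : Prop :=
  ∀ {A : 𝒞} (G : A ⟶ X), ∃ (Gb : D.P A ⟶ X) (cG : G ≅ D.y A ≫ Gb),
    ExhibitsLeftExt (D.y A) G Gb cG.hom ∧
    ∀ {A' : 𝒞} (F : A' ⟶ D.P A),
      RespectsLeftExt (D.y A') F (D.ext F) (D.c F).hom Gb

/-- A 1-cell is a `P`-homomorphism when it respects all left extensions along units. -/
def PHomomorphism (D : KZDoctrine 𝒞) {X Y : 𝒞} (E : X ⟶ Y) : Prop :=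
  ∀ {A : 𝒞} (G : A ⟶ X) (Gb : D.P A ⟶ X) (η : G ⟶ D.y A ≫ Gb),
    ExhibitsLeftExt (D.y A) G Gb η → RespectsLeftExt (D.y A) G Gb η E

/-- The data `(R, φ)` witnesses `P`-admissibility of `L`: `φ` exhibits `R` as a left
extension of `y A` along `L`, and this left extension is respected by every left extension
`Hb : P A ⟶ X` along `y A` into every `P`-cocomplete object `X`. -/
def AdmissibleData (D : KZDoctrine 𝒞) {A B : 𝒞} (L : A ⟶ B) (R : B ⟶ D.P A)
    (φ : D.y A ⟶ L ≫ R) : Prop :=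
  ExhibitsLeftExt L (D.y A) R φ ∧
  ∀ {X : 𝒞}, PCocomplete D X →
    ∀ (H : A ⟶ X) (Hb : D.P A ⟶ X) (cH : H ≅ D.y A ≫ Hb),
      ExhibitsLeftExt (D.y A) H Hb cH.hom → RespectsLeftExt L (D.y A) R φ Hb

/-- A 1-cell `L` is `P`-admissible when some `(R, φ)` witnesses its admissibility. -/
def PAdmissible (D : KZDoctrine 𝒞) {A B : 𝒞} (L : A ⟶ B) : Prop :=
  ∃ (R : B ⟶ D.P A) (φ : D.y A ⟶ L ≫ R), AdmissibleData D L R φ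

/-! With `(R_L, φ_L)` and `(R_K, φ_K)` witnessing admissibility of `L` and `K`, the witness for
`L ≫ K` is `R_K ≫ ext R_L`. Left extensions paste: `φ_L` extends `y A` along `L` to `R_L`, and
`R_L ≅ y B ≫ ext R_L` extends along `K` to `R_K ≫ ext R_L` because `ext R_L`, a left extension
into the cocomplete `P A`, respects `φ_K`. For a left extension `Hb` into a cocomplete `X`, the
same pasting whiskered by `Hb` works: `Hb` respects `φ_L`, and `ext R_L ≫ Hb` is again a left
extension along `y B` (left extensions are unique, so `Hb` respects the chosen ones), hence it
respects `φ_K`. -/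

namespace ExhibitsLeftExt

variable {a b c : 𝒞} {L : a ⟶ b} {I : a ⟶ c} {R : b ⟶ c} {η : I ⟶ L ≫ R}

theorem precomp_iso (h : ExhibitsLeftExt L I R η) {I' : a ⟶ c} (e : I' ≅ I) :
    ExhibitsLeftExt L I' R (e.hom ≫ η) := fun M => by
  convert e.symm.homFromEquiv.bijective.comp (h M) using 1
  funext σ
  simp

theorem postcomp_iso (h : ExhibitsLeftExt L I R η) {R' : b ⟶ c} (r : R ≅ R') :
    ExhibitsLeftExt L I R' (η ≫ L ◁ r.hom) := fun M => by
  convert (h M).comp r.symm.homFromEquiv.bijective using 1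
  funext σ
  simp

theorem unique (h : ExhibitsLeftExt L I R η) {R' : b ⟶ c} {η' : I ⟶ L ≫ R'}
    (h' : ExhibitsLeftExt L I R' η') : Nonempty (R ≅ R') := by
  obtain ⟨f, hf⟩ := (h R').2 η'
  obtain ⟨g, hg⟩ := (h' R).2 η
  refine ⟨⟨f, g, (h R).1 ?_, (h' R').1 ?_⟩⟩
  · simp only [Bicategory.whiskerLeft_comp, ← Category.assoc] at hf hg ⊢
    rw [hf, hg]; simp
  · simp only [Bicategory.whiskerLeft_comp, ← Category.assoc] at hf hg ⊢
    rw [hg, hf]; simp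

theorem comp {d : 𝒞} {K : b ⟶ d} {T : d ⟶ c} {χ : R ⟶ K ≫ T}
    (h : ExhibitsLeftExt L I R η) (hχ : ExhibitsLeftExt K R T χ) :
    ExhibitsLeftExt (L ≫ K) I T (η ≫ L ◁ χ ≫ (α_ L K T).inv) := fun M => by
  have := (α_ L K M).symm.homToEquiv.bijective.comp ((h (K ≫ M)).comp (hχ M))
  convert this using 1
  funext σ
  simp

end ExhibitsLeftExt

namespace RespectsLeftExt

variable {a b c d : 𝒞} {L : a ⟶ b} {I : a ⟶ c} {R : b ⟶ c} {η : I ⟶ L ≫ R} {E : c ⟶ d}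

theorem precomp_iso (h : RespectsLeftExt L I R η E) {I' : a ⟶ c} (e : I' ≅ I) :
    RespectsLeftExt L I' R (e.hom ≫ η) E := by
  unfold RespectsLeftExt
  convert ExhibitsLeftExt.precomp_iso h (whiskerRightIso e E) using 1
  simp

theorem of_iso (h : RespectsLeftExt L I R η E) {E' : c ⟶ d} (τ : E ≅ E') :
    RespectsLeftExt L I R η E' := by
  unfold RespectsLeftExt
  convert (ExhibitsLeftExt.precomp_iso h (whiskerLeftIso I τ).symm).postcomp_iso
    (whiskerLeftIso R τ) using 1
  simp [whisker_exchange_assoc]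

theorem of_comp {x : 𝒞} {F : d ⟶ x} (h : RespectsLeftExt L I R η (E ≫ F)) :
    RespectsLeftExt L (I ≫ E) (R ≫ E) (η ▷ E ≫ (α_ L R E).hom) F := by
  unfold RespectsLeftExt
  convert (ExhibitsLeftExt.precomp_iso h (α_ I E F)).postcomp_iso (α_ R E F).symm using 1
  rw [Iso.symm_hom]
  bicategory

theorem comp {x : 𝒞} {K : b ⟶ x} {T : x ⟶ c} {χ : R ⟶ K ≫ T}
    (h : RespectsLeftExt L I R η E) (hχ : RespectsLeftExt K R T χ E) :
    RespectsLeftExt (L ≫ K) I T (η ≫ L ◁ χ ≫ (α_ L K T).inv) E := by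
  unfold RespectsLeftExt
  convert ExhibitsLeftExt.comp h hχ using 1
  bicategory

end RespectsLeftExt

theorem KZDoctrine.pCocomplete_P (D : KZDoctrine 𝒞) (A : 𝒞) : PCocomplete D (D.P A) :=
  fun G => ⟨D.ext G, D.c G, D.ext_isLeftExt G, fun F => D.ext_respects F G⟩

theorem PCocomplete.respectsLeftExt_ext {D : KZDoctrine 𝒞} {X : 𝒞} (hX : PCocomplete D X)
    {A : 𝒞} {H : A ⟶ X} {Hb : D.P A ⟶ X} {η : H ⟶ D.y A ≫ Hb}
    (hHb : ExhibitsLeftExt (D.y A) H Hb η) {A' : 𝒞} (F : A' ⟶ D.P A) :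
    RespectsLeftExt (D.y A') F (D.ext F) (D.c F).hom Hb := by
  obtain ⟨_, _, hGb, hG_resp⟩ := hX H
  obtain ⟨τ⟩ := hGb.unique hHb
  exact (hG_resp F).of_iso τ

/-- `P`-admissible 1-cells are closed under composition. -/
theorem stmt9 (D : KZDoctrine 𝒞) {A B C : 𝒞} (L : A ⟶ B) (K : B ⟶ C)
    (hL : PAdmissible D L) (hK : PAdmissible D K) : PAdmissible D (L ≫ K) := by
  obtain ⟨RL, φL, hL_ext, hL_resp⟩ := hL
  obtain ⟨RK, φK, -, hK_resp⟩ := hK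
  refine ⟨RK ≫ D.ext RL, _, hL_ext.comp (ExhibitsLeftExt.precomp_iso
    (hK_resp (D.pCocomplete_P A) RL _ _ (D.ext_isLeftExt RL)) (D.c RL)), ?_⟩
  intro X hX H Hb cH hHb
  have hRL_Hb : ExhibitsLeftExt (D.y B) (RL ≫ Hb) (D.ext RL ≫ Hb)
      (whiskerRightIso (D.c RL) Hb ≪≫ α_ _ _ _).hom :=
    hX.respectsLeftExt_ext hHb RL
  exact (hL_resp hX H Hb cH hHb).comp
    ((hK_resp hX _ _ _ hRL_Hb).of_comp.precomp_iso (D.c RL))
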